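/- There is a constant c (c = 100 suffices) such that for all sufficiently small ε ∈ (0,1) and all r > 0, every (1+ε/c)-spanner of the core gadget H_r must contain every long edge of H_r, and consequently has total weight at least w(MST(H_r))/(6ε). In particular, for every long edge e = (x_i, x_{i+k}), the shortest-path distance between x_i and x_{i+k} in H_r with e removed exceeds (1+ε/c) times the weight of e. -/

import Mathlib

open scoped ENNReal

namespace LightSpanners

/-- The total weight of a walk: the sum of the weights of its edges. -/
def walkWeight {V : Type*} {G : SimpleGraph V} (w : Sym2 V → ℝ) {u v : V} (p : G.Walk u v) : ℝ :=
  (p.edges.map w).sum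

/-- Weighted shortest-path distance (`∞` if there is no path). -/
noncomputable def wdist {V : Type*} (G : SimpleGraph V) (w : Sym2 V → ℝ) (u v : V) : ℝ≥0∞ :=
  ⨅ p : G.Walk u v, ENNReal.ofReal (walkWeight w p)

/-- Total edge weight of a graph. -/
noncomputable def gweight {V : Type*} (G : SimpleGraph V) (w : Sym2 V → ℝ) : ℝ :=
  ∑ᶠ e ∈ G.edgeSet, w e

/-- All edges have positive weight. -/
def PosWeights {V : Type*} (G : SimpleGraph V) (w : Sym2 V → ℝ) : Prop :=
  ∀ e ∈ G.edgeSet, 0 < w e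

/-- Weight of a minimum spanning tree of `G`: the infimum of the total weights of
spanning trees of `G`. -/
noncomputable def mstWeight {V : Type*} (G : SimpleGraph V) (w : Sym2 V → ℝ) : ℝ :=
  sInf {x : ℝ | ∃ T : SimpleGraph V, T ≤ G ∧ T.IsTree ∧ gweight T w = x}

/-- `H` is a `t`-spanner of `G` (with edge weights `w`). -/
def IsSpanner {V : Type*} (G H : SimpleGraph V) (w : Sym2 V → ℝ) (t : ℝ) : Prop :=
  H ≤ G ∧ ∀ u v : V, wdist H w u v ≤ ENNReal.ofReal t * wdist G w u v

/-- `G` contains the complete graph on `r` vertices as a minor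
(branch-set characterization). -/
def HasCompleteMinor {V : Type*} (G : SimpleGraph V) (r : ℕ) : Prop :=
  ∃ B : Fin r → Set V,
    (∀ i, (B i).Nonempty) ∧
    (∀ i, (G.induce (B i)).Connected) ∧
    (∀ i j, i ≠ j → Disjoint (B i) (B j)) ∧
    (∀ i j, i ≠ j → ∃ u ∈ B i, ∃ v ∈ B j, G.Adj u v)

/-- Euclidean/metric weights on the pairs of a set of points. -/
noncomputable def distW {E : Type*} [PseudoMetricSpace E] (s : Set E) : Sym2 s → ℝ :=
  Sym2.lift ⟨fun a b => dist (a : E) (b : E), fun a b => dist_comm _ _⟩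

/-- The breakpoints of the core gadget at scale `r`:  the `a`-th breakpoint is the point
of the circle of radius `r` centered at the origin with angle `a·ε^{3/2}` (so consecutive
breakpoints subtend an angle `ε^{3/2}`). -/
noncomputable def gadgetPt (r ε : ℝ) (a : ℕ) : ℂ :=
  (r : ℂ) * Complex.exp ((((a : ℝ) * ε ^ ((3 : ℝ) / 2) : ℝ) : ℂ) * Complex.I)

/-- The (abstract) core gadget graph on the `2k` breakpoints `0, 1, …, 2k−1`:
the short edges `(i, i+1)` for `0 ≤ i ≤ 2k−2`, the long edges `(i, i+k)` for
`0 ≤ i ≤ k−1`, and the terminal edge `(0, 2k−1)`. -/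
def coreGadget (k : ℕ) : SimpleGraph (Fin (2 * k)) :=
  SimpleGraph.fromRel (fun i j =>
    (j : ℕ) = (i : ℕ) + 1 ∨ (j : ℕ) = (i : ℕ) + k ∨
      ((i : ℕ) = 0 ∧ (j : ℕ) = 2 * k - 1))

/-- The edge weights of the core gadget at scale `r`: Euclidean distances between the
corresponding breakpoints. -/
noncomputable def gadgetW (r ε : ℝ) {k : ℕ} : Sym2 (Fin (2 * k)) → ℝ :=
  Sym2.lift ⟨fun i j => dist (gadgetPt r ε (i : ℕ)) (gadgetPt r ε (j : ℕ)),
    fun i j => dist_comm _ _⟩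

/-! Write `s = √ε`, so that consecutive breakpoints subtend the angle `s ^ 3` and
`s ^ 2 * (2 * k - 1) = 1`: short edges have length `σ = 2 r sin (s ^ 3 / 2)`, long edges
`L = 2 r sin ((s + s ^ 3) / 4)` and the terminal edge `T = 2 r sin (s / 2)`.

When the long edge `(x_i, x_{i+k})` is deleted, the potential on the breakpoints that grows with
slope `σ` on `[i, i + k]` and with slope `σ - (k σ - L)` elsewhere changes along every remaining
edge by at most its weight, but by `k σ` from `x_i` to `x_{i+k}`. So every remaining path has
weight at least `k σ > (1 + ε / 100) L`, and a `(1 + ε / 100)`-spanner keeps all `k` long edges,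
of total weight `k L`. The path `x_1 ⋯ x_{2k}` is a spanning tree of weight
`(2 k - 1) σ ≤ 6 ε k L`. The inequalities between `σ`, `L` and `T` that this needs become
polynomial inequalities in `s` once `sin` is replaced by its Taylor bounds. -/

open SimpleGraph Real

section Walks

variable {V : Type*} {G H : SimpleGraph V} {w : Sym2 V → ℝ} {u v : V}

@[simp] lemma walkWeight_nil : walkWeight w (Walk.nil : G.Walk u u) = 0 := rfl

@[simp] lemma walkWeight_cons {x : V} (h : G.Adj u v) (p : G.Walk v x) :
    walkWeight w (Walk.cons h p) = w s(u, v) + walkWeight w p := by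
  simp [walkWeight]

@[simp] lemma walkWeight_mapLe (hGH : G ≤ H) (p : G.Walk u v) :
    walkWeight w (p.mapLe hGH) = walkWeight w p := by
  simp [walkWeight, Walk.mapLe]

lemma wdist_le_walkWeight (p : G.Walk u v) : wdist G w u v ≤ ENNReal.ofReal (walkWeight w p) :=
  iInf_le _ p

lemma wdist_le_of_adj (h : G.Adj u v) : wdist G w u v ≤ ENNReal.ofReal (w s(u, v)) := by
  simpa using wdist_le_walkWeight (w := w) (Walk.cons h Walk.nil)

lemma wdist_le_wdist_of_le (hGH : G ≤ H) : wdist H w u v ≤ wdist G w u v :=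
  le_iInf fun p => (wdist_le_walkWeight (p.mapLe hGH)).trans_eq (by rw [walkWeight_mapLe])

lemma sub_le_walkWeight (Φ : V → ℝ) (hΦ : ∀ a b, G.Adj a b → Φ b - Φ a ≤ w s(a, b))
    (p : G.Walk u v) : Φ v - Φ u ≤ walkWeight w p := by
  induction p with
  | nil => simp
  | cons h p ih => simp only [walkWeight_cons]; linarith [hΦ _ _ h]

lemma ofReal_sub_le_wdist (Φ : V → ℝ)
    (hΦ : ∀ a b, G.Adj a b → Φ b - Φ a ≤ w s(a, b)) :
    ENNReal.ofReal (Φ v - Φ u) ≤ wdist G w u v :=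
  le_iInf fun p => ENNReal.ofReal_le_ofReal (sub_le_walkWeight Φ hΦ p)

end Walks

lemma IsSpanner.adj_of_lt_wdist_deleteEdges {V : Type*} {G H : SimpleGraph V} {w : Sym2 V → ℝ}
    {t : ℝ} {u v : V} (hH : IsSpanner G H w t) (ht : 0 ≤ t) (huv : G.Adj u v)
    (hlt : ENNReal.ofReal (t * w s(u, v)) < wdist (G.deleteEdges {s(u, v)}) w u v) :
    H.Adj u v := by
  by_contra hnot
  have hle : H ≤ G.deleteEdges {s(u, v)} :=
    calc H = H.deleteEdges {s(u, v)} :=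
          (deleteEdges_eq_self.mpr (Set.disjoint_singleton_right.mpr hnot)).symm
      _ ≤ G.deleteEdges {s(u, v)} := deleteEdges_mono hH.1
  refine (hlt.trans_le (wdist_le_wdist_of_le hle)).not_ge ?_
  calc wdist H w u v ≤ ENNReal.ofReal t * wdist G w u v := hH.2 u v
    _ ≤ ENNReal.ofReal t * ENNReal.ofReal (w s(u, v)) := by gcongr; exact wdist_le_of_adj huv
    _ = ENNReal.ofReal (t * w s(u, v)) := (ENNReal.ofReal_mul ht).symm

section Weight

variable {V : Type*} [Finite V] {w : Sym2 V → ℝ}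

lemma sum_le_gweight (H : SimpleGraph V) {s : Finset (Sym2 V)} (hs : ↑s ⊆ H.edgeSet)
    (hw : ∀ e, 0 ≤ w e) : ∑ e ∈ s, w e ≤ gweight H w := by
  rw [gweight, finsum_mem_eq_finite_toFinset_sum _ (Set.toFinite _)]
  exact Finset.sum_le_sum_of_subset_of_nonneg (by simpa using hs) fun e _ _ => hw e

lemma mstWeight_le_gweight {G T : SimpleGraph V} (hw : ∀ e, 0 ≤ w e) (hTG : T ≤ G)
    (hT : T.IsTree) : mstWeight G w ≤ gweight T w := by
  refine csInf_le ⟨0, ?_⟩ ⟨T, hTG, hT, rfl⟩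
  rintro _ ⟨T', -, -, rfl⟩
  simpa using sum_le_gweight T' (s := ∅) (by simp) hw

end Weight

lemma IsTree.gweight_eq {V : Type*} [Fintype V] {T : SimpleGraph V} (hT : T.IsTree)
    {w : Sym2 V → ℝ} {c : ℝ} (hw : ∀ e ∈ T.edgeSet, w e = c) :
    gweight T w = ((Fintype.card V : ℝ) - 1) * c := by
  classical
  have hcard := hT.card_edgeFinset
  rw [gweight, ← coe_edgeFinset, finsum_mem_coe_finset,
    Finset.sum_congr rfl fun e he => hw e (mem_edgeFinset.mp he), Finset.sum_const, nsmul_eq_mul,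
    ← hcard]
  push_cast
  ring

lemma pathGraph_adj_mem_edges {n : ℕ} {u v : Fin n} (huv : (u : ℕ) + 1 = v)
    (p : (pathGraph n).Walk u v) : s(u, v) ∈ p.edges := by
  obtain ⟨⟨⟨a, b⟩, hab⟩, hd, ha, hb⟩ :=
    p.exists_boundary_dart {x | (x : ℕ) ≤ u} (by simp) (by simp; omega)
  simp only [pathGraph_adj, Set.mem_ofPred_eq, not_le] at hab ha hb
  obtain rfl : a = u := Fin.ext (by omega)
  obtain rfl : b = v := Fin.ext (by omega)
  exact List.mem_map_of_mem hd

lemma pathGraph_isAcyclic (n : ℕ) : (pathGraph n).IsAcyclic := by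
  refine isAcyclic_iff_forall_adj_isBridge.mpr fun u v huv =>
    isBridge_iff_forall_walk_mem_edges.mpr fun p => ?_
  rcases pathGraph_adj.mp huv with h | h
  · exact pathGraph_adj_mem_edges h p
  · simpa [Sym2.eq_swap] using pathGraph_adj_mem_edges h p.reverse

lemma pathGraph_isTree {n : ℕ} (hn : n ≠ 0) : (pathGraph n).IsTree := by
  obtain ⟨m, rfl⟩ := Nat.exists_eq_succ_of_ne_zero hn
  exact ⟨pathGraph_connected m, pathGraph_isAcyclic _⟩

lemma pathGraph_le_coreGadget (k : ℕ) : pathGraph (2 * k) ≤ coreGadget k := by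
  intro a b hab
  rw [pathGraph_adj] at hab
  rw [coreGadget, fromRel_adj]
  exact ⟨fun h => by subst h; omega, hab.imp (fun h => Or.inl h.symm) (fun h => Or.inl h.symm)⟩

lemma coreGadget_adj_of_eq_add {k : ℕ} {i j : Fin (2 * k)} (hj : (j : ℕ) = i + k) :
    (coreGadget k).Adj i j := by
  rw [coreGadget, fromRel_adj]
  exact ⟨fun h => by subst h; omega, Or.inl (Or.inr (Or.inl hj))⟩

section WindowPotential

/-- The potential with slope `σ` on the window `[i, i + k]` and slope `σ - D` elsewhere. -/
def windowPotential (σ D : ℝ) (i k m : ℕ) : ℝ :=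
  (σ - D) * m + D * (min m (i + k) - min m i : ℕ)

variable {σ D : ℝ} {i k : ℕ}

lemma abs_windowPotential_succ_sub (hD : 0 ≤ D) (hDσ : D ≤ 2 * σ) (m : ℕ) :
    |windowPotential σ D i k (m + 1) - windowPotential σ D i k m| ≤ σ := by
  rcases (by omega : min (m + 1) (i + k) - min (m + 1) i = min m (i + k) - min m i ∨
      min (m + 1) (i + k) - min (m + 1) i = min m (i + k) - min m i + 1) with h | h <;>
    · simp only [windowPotential, h]
      push_cast
      rw [abs_le]
      constructor <;> linarith

lemma abs_windowPotential_add_sub (hD : 0 ≤ D) (hDσ : D ≤ 2 * σ) (hi : i < k) {m : ℕ}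
    (hm : m < k) (hmi : m ≠ i) :
    |windowPotential σ D i k (m + k) - windowPotential σ D i k m| ≤ k * σ - D := by
  obtain ⟨δ, hδ, hδ1, hδk⟩ : ∃ δ : ℕ, min (m + k) (i + k) - min (m + k) i =
      min m (i + k) - min m i + δ ∧ 1 ≤ δ ∧ δ + 1 ≤ k :=
    ⟨_, (Nat.add_sub_of_le (by omega)).symm, by omega, by omega⟩
  have hδ1' : (1 : ℝ) ≤ δ := by exact_mod_cast hδ1
  have hδk' : (δ : ℝ) + 1 ≤ k := by exact_mod_cast hδk
  simp only [windowPotential, hδ]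
  push_cast
  rw [abs_le]
  constructor <;> nlinarith [mul_le_mul_of_nonneg_left hδ1' hD, mul_le_mul_of_nonneg_left hδk' hD]

lemma windowPotential_add_sub_self :
    windowPotential σ D i k (i + k) - windowPotential σ D i k i = k * σ := by
  simp only [windowPotential, min_self, le_add_iff_nonneg_right, zero_le, min_eq_right,
    Nat.sub_self, min_eq_left, Nat.add_sub_cancel_left]
  push_cast
  ring

lemma windowPotential_last_sub_zero (hi : i < k) :
    windowPotential σ D i k (2 * k - 1) - windowPotential σ D i k 0 =
      (2 * k - 1) * σ - (k - 1) * D := by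
  have h : min (2 * k - 1) (i + k) - min (2 * k - 1) i = k := by omega
  simp only [windowPotential, h, Nat.zero_min, Nat.sub_self, Nat.cast_sub (by omega : 1 ≤ 2 * k)]
  push_cast
  ring

end WindowPotential

lemma coreGadget_ofReal_le_wdist_deleteEdges {k : ℕ} {w : Sym2 (Fin (2 * k)) → ℝ}
    {σ L T : ℝ}
    (hshort : ∀ a b : Fin (2 * k), (b : ℕ) = a + 1 → σ ≤ w s(a, b))
    (hlong : ∀ a b : Fin (2 * k), (b : ℕ) = a + k → L ≤ w s(a, b))
    (hterm : ∀ a b : Fin (2 * k), (a : ℕ) = 0 → (b : ℕ) = 2 * k - 1 → T ≤ w s(a, b))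
    (hLσ : (k - 2) * σ ≤ L) (hσL : L ≤ k * σ)
    (hT : (2 * k - 1) * σ - (k - 1) * (k * σ - L) ≤ T)
    {i j : Fin (2 * k)} (hj : (j : ℕ) = i + k) :
    ENNReal.ofReal (k * σ) ≤ wdist ((coreGadget k).deleteEdges {s(i, j)}) w i j := by
  have hi : (i : ℕ) < k := by omega
  have hD : 0 ≤ k * σ - L := by linarith
  have hDσ : k * σ - L ≤ 2 * σ := by linarith
  set Φ : Fin (2 * k) → ℝ := fun a => windowPotential σ (k * σ - L) i k a
  have key : ∀ a b : Fin (2 * k), ((b : ℕ) = a + 1 ∨ (b : ℕ) = a + k ∨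
      ((a : ℕ) = 0 ∧ (b : ℕ) = 2 * k - 1)) → s(a, b) ≠ s(i, j) →
      |Φ b - Φ a| ≤ w s(a, b) := by
    rintro a b (h | h | ⟨ha, hb⟩) hne
    · simpa [Φ, h] using (abs_windowPotential_succ_sub hD hDσ _).trans (hshort a b h)
    · have hai : (a : ℕ) ≠ i := fun hai =>
        hne (by rw [Fin.ext hai, Fin.ext (h.trans (hai ▸ hj.symm))])
      have := abs_windowPotential_add_sub hD hDσ hi (by omega) hai
      simp only [Φ, h]
      linarith [hlong a b h]
    · have hk : (1 : ℝ) ≤ k := by exact_mod_cast hi.pos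
      simp only [Φ, ha, hb, windowPotential_last_sub_zero hi, abs_le]
      constructor <;>
        nlinarith [hterm a b ha hb,
          mul_le_mul_of_nonneg_left hDσ (by linarith : (0 : ℝ) ≤ k - 1)]
  have hΦ := ofReal_sub_le_wdist (G := (coreGadget k).deleteEdges {s(i, j)}) (w := w)
    (u := i) (v := j) Φ ?_
  · simpa [Φ, hj, windowPotential_add_sub_self] using hΦ
  intro a b hab
  simp only [deleteEdges_adj, coreGadget, fromRel_adj, Set.mem_singleton_iff] at hab
  obtain ⟨⟨-, hab | hba⟩, hne⟩ := hab
  · exact (le_abs_self _).trans (key a b hab hne)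
  · rw [Sym2.eq_swap] at hne ⊢
    exact (le_abs_self _).trans_eq (abs_sub_comm _ _) |>.trans (key b a hba hne)

lemma sin_le_sub_cube_add_pow_five {x : ℝ} (hx : 0 ≤ x) (hx1 : x ≤ 1) :
    sin x ≤ x - x ^ 3 / 6 + x ^ 5 / 100 := by
  have := (abs_le.mp (sin_bound (abs_le.mpr ⟨by linarith, hx1⟩))).2
  rwa [abs_of_nonneg hx, sub_le_iff_le_add'] at this

lemma pow_mul_sq_pow_le {s : ℝ} (hs : 0 ≤ s) (hs' : s ^ 2 ≤ 1 / 100) (m n : ℕ) :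
    s ^ m * (s ^ 2) ^ n ≤ s ^ m * (1 / 100) ^ n :=
  mul_le_mul_of_nonneg_left (pow_le_pow_left₀ (by positivity) hs' n) (by positivity)

section GadgetAngles

/-! `s ^ 3 / 2`, `k * s ^ 3 / 2` and `(2 * k - 1) * s ^ 3 / 2` are half the central angles of a
short, a long and the terminal edge; under `s ^ 2 * (2 * k - 1) = 1` the last two equal
`(s + s ^ 3) / 4` and `s / 2`. -/

variable {k s : ℝ}

lemma sub_two_mul_sin_le (hs : 0 < s) (hs' : s ^ 2 ≤ 1 / 100) (hks : s ^ 2 * (2 * k - 1) = 1) :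
    (k - 2) * sin (s ^ 3 / 2) ≤ sin (k * s ^ 3 / 2) := by
  rw [show k * s ^ 3 / 2 = (s + s ^ 3) / 4 by linear_combination s / 4 * hks]
  have h1 : (1 - 3 * s ^ 2) * sin (s ^ 3 / 2) ≤ (1 - 3 * s ^ 2) * (s ^ 3 / 2) := by
    gcongr
    · linarith
    · exact sin_le (by positivity)
  have h2 : (1 - 3 * s ^ 2) * (s ^ 3 / 2) ≤
      2 * s ^ 2 * ((s + s ^ 3) / 4 - ((s + s ^ 3) / 4) ^ 3 / 6) := by
    have := pow_mul_sq_pow_le hs.le hs' 5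
    linarith [this 1, this 2, this 3, pow_pos hs 5]
  have h3 : 2 * s ^ 2 * ((s + s ^ 3) / 4 - ((s + s ^ 3) / 4) ^ 3 / 6) ≤
      2 * s ^ 2 * sin ((s + s ^ 3) / 4) := by
    gcongr
    exact sin_ge_sub_cube (by positivity)
  refine le_of_mul_le_mul_left ?_ (by positivity : 0 < 2 * s ^ 2)
  linear_combination h1 + h2 + h3 + sin (s ^ 3 / 2) * hks

lemma one_add_mul_sin_lt (hs : 0 < s) (hs' : s ^ 2 ≤ 1 / 100)
    (hks : s ^ 2 * (2 * k - 1) = 1) :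
    (1 + s ^ 2 / 100) * sin (k * s ^ 3 / 2) < k * sin (s ^ 3 / 2) := by
  rw [show k * s ^ 3 / 2 = (s + s ^ 3) / 4 by linear_combination s / 4 * hks]
  have h1 : 2 * s ^ 2 * (1 + s ^ 2 / 100) * sin ((s + s ^ 3) / 4) ≤
      2 * s ^ 2 * (1 + s ^ 2 / 100) *
        ((s + s ^ 3) / 4 - ((s + s ^ 3) / 4) ^ 3 / 6 + ((s + s ^ 3) / 4) ^ 5 / 100) := by
    gcongr
    exact sin_le_sub_cube_add_pow_five (by positivity) (by nlinarith)
  have h2 : 2 * s ^ 2 * (1 + s ^ 2 / 100) *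
        ((s + s ^ 3) / 4 - ((s + s ^ 3) / 4) ^ 3 / 6 + ((s + s ^ 3) / 4) ^ 5 / 100) <
      (1 + s ^ 2) * (s ^ 3 / 2 - (s ^ 3 / 2) ^ 3 / 6) := by
    have := pow_mul_sq_pow_le hs.le hs' 5
    linarith [this 2, this 3, this 4, this 5, this 6, this 7, pow_pos hs 5, pow_pos hs 7]
  have h3 : (1 + s ^ 2) * (s ^ 3 / 2 - (s ^ 3 / 2) ^ 3 / 6) ≤ (1 + s ^ 2) * sin (s ^ 3 / 2) := by
    gcongr
    exact sin_ge_sub_cube (by positivity)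
  refine lt_of_mul_lt_mul_left ?_ (by positivity : 0 ≤ 2 * s ^ 2)
  linear_combination h1 + h2 + h3 - sin (s ^ 3 / 2) * hks

lemma sub_mul_sub_le_sin (hs : 0 < s) (hs' : s ^ 2 ≤ 1 / 100) (hks : s ^ 2 * (2 * k - 1) = 1) :
    (2 * k - 1) * sin (s ^ 3 / 2) - (k - 1) * (k * sin (s ^ 3 / 2) - sin (k * s ^ 3 / 2)) ≤
      sin ((2 * k - 1) * s ^ 3 / 2) := by
  rw [show k * s ^ 3 / 2 = (s + s ^ 3) / 4 by linear_combination s / 4 * hks,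
    show (2 * k - 1) * s ^ 3 / 2 = s / 2 by linear_combination s / 2 * hks]
  have h1 : (1 - 4 * s ^ 2 - s ^ 4) * (s ^ 3 / 2 - (s ^ 3 / 2) ^ 3 / 6) ≤
      (1 - 4 * s ^ 2 - s ^ 4) * sin (s ^ 3 / 2) := by
    gcongr
    · nlinarith
    · exact sin_ge_sub_cube (by positivity)
  have h2 : (2 * s ^ 2 - 2 * s ^ 4) * sin ((s + s ^ 3) / 4) ≤
      (2 * s ^ 2 - 2 * s ^ 4) *
        ((s + s ^ 3) / 4 - ((s + s ^ 3) / 4) ^ 3 / 6 + ((s + s ^ 3) / 4) ^ 5 / 100) := by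
    gcongr
    · nlinarith
    · exact sin_le_sub_cube_add_pow_five (by positivity) (by nlinarith)
  have h3 : 4 * s ^ 4 * (s / 2 - (s / 2) ^ 3 / 6) ≤ 4 * s ^ 4 * sin (s / 2) := by
    gcongr
    exact sin_ge_sub_cube (by positivity)
  have h4 : 0 ≤ (1 - 4 * s ^ 2 - s ^ 4) * (s ^ 3 / 2 - (s ^ 3 / 2) ^ 3 / 6) -
      (2 * s ^ 2 - 2 * s ^ 4) *
        ((s + s ^ 3) / 4 - ((s + s ^ 3) / 4) ^ 3 / 6 + ((s + s ^ 3) / 4) ^ 5 / 100) +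
      4 * s ^ 4 * (s / 2 - (s / 2) ^ 3 / 6) := by
    have := pow_mul_sq_pow_le hs.le hs' 5
    linarith [this 1, this 2, pow_pos hs 5, pow_pos hs 11, pow_pos hs 13, pow_pos hs 15,
      pow_pos hs 17, pow_pos hs 19]
  refine le_of_mul_le_mul_left ?_ (by positivity : 0 < 4 * s ^ 4)
  linear_combination h1 + h2 + h3 + h4 +
    (2 * s ^ 2 * sin ((s + s ^ 3) / 4) - (2 * s ^ 2 * k - 5 * s ^ 2 + 1) * sin (s ^ 3 / 2)) * hks

lemma mul_sin_le_mul_sin (hs : 0 < s) (hs' : s ^ 2 ≤ 1 / 100) (hks : s ^ 2 * (2 * k - 1) = 1) :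
    (2 * k - 1) * sin (s ^ 3 / 2) ≤ 6 * s ^ 2 * k * sin (k * s ^ 3 / 2) := by
  rw [show k * s ^ 3 / 2 = (s + s ^ 3) / 4 by linear_combination s / 4 * hks]
  have h1 := sin_le (by positivity : 0 ≤ s ^ 3 / 2)
  have h2 : s ^ 3 / 2 ≤
      3 * s ^ 2 * (1 + s ^ 2) * ((s + s ^ 3) / 4 - ((s + s ^ 3) / 4) ^ 3 / 6) := by
    have := pow_mul_sq_pow_le hs.le hs' 3
    linarith [this 3, this 4, this 5, pow_pos hs 3, pow_pos hs 5, pow_pos hs 7]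
  have h3 : 3 * s ^ 2 * (1 + s ^ 2) * ((s + s ^ 3) / 4 - ((s + s ^ 3) / 4) ^ 3 / 6) ≤
      3 * s ^ 2 * (1 + s ^ 2) * sin ((s + s ^ 3) / 4) := by
    gcongr
    exact sin_ge_sub_cube (by positivity)
  refine le_of_mul_le_mul_left ?_ (by positivity : 0 < s ^ 2)
  linear_combination h1 + h2 + h3 + (sin (s ^ 3 / 2) - 3 * s ^ 2 * sin ((s + s ^ 3) / 4)) * hks

end GadgetAngles

lemma dist_gadgetPt {r : ℝ} (hr : 0 ≤ r) (ε : ℝ) (a b : ℕ) :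
    dist (gadgetPt r ε a) (gadgetPt r ε b) =
      2 * r * |sin ((b - a) * ε ^ ((3 : ℝ) / 2) / 2)| := by
  set τ := ε ^ ((3 : ℝ) / 2)
  have h : Complex.exp (((b * τ : ℝ) : ℂ) * Complex.I) -
      Complex.exp (((a * τ : ℝ) : ℂ) * Complex.I) =
      Complex.exp (((a * τ : ℝ) : ℂ) * Complex.I) *
        (Complex.exp (Complex.I * ((b - a) * τ : ℝ)) - 1) := by
    rw [mul_sub, ← Complex.exp_add]
    push_cast
    ring_nf
  rw [_root_.dist_comm, Complex.dist_eq, gadgetPt, gadgetPt, ← mul_sub, h, norm_mul, norm_mul,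
    Complex.norm_real, Real.norm_of_nonneg hr, Complex.norm_exp_ofReal_mul_I,
    Complex.norm_exp_I_mul_ofReal_sub_one, Real.norm_eq_abs, abs_mul, abs_two]
  ring

lemma gadgetW_nonneg (r ε : ℝ) {k : ℕ} (e : Sym2 (Fin (2 * k))) : 0 ≤ gadgetW r ε e := by
  induction e using Sym2.ind with
  | _ a b => exact _root_.dist_nonneg (x := gadgetPt r ε a)


section CoreGadget

variable {k : ℕ}

lemma mstWeight_coreGadget_le (hk : 0 < k) {w : Sym2 (Fin (2 * k)) → ℝ} (hw : ∀ e, 0 ≤ w e)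
    {σ : ℝ} (hσ : ∀ a b : Fin (2 * k), (b : ℕ) = a + 1 → w s(a, b) = σ) :
    mstWeight (coreGadget k) w ≤ (2 * k - 1) * σ := by
  have hpath := pathGraph_isTree (n := 2 * k) (by omega)
  refine (mstWeight_le_gweight hw (pathGraph_le_coreGadget k) hpath).trans_eq ?_
  rw [IsTree.gweight_eq hpath (c := σ), Fintype.card_fin]
  · push_cast
    ring
  intro e he
  induction e using Sym2.ind with
  | _ a b =>
    rcases pathGraph_adj.mp he with h | h
    · exact hσ a b h.symm
    · rw [Sym2.eq_swap]
      exact hσ b a h.symm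

lemma mul_le_gweight_of_long_edges {w : Sym2 (Fin (2 * k)) → ℝ} (hw : ∀ e, 0 ≤ w e)
    {L : ℝ} (hL : ∀ a b : Fin (2 * k), (b : ℕ) = a + k → w s(a, b) = L)
    {H : SimpleGraph (Fin (2 * k))} (hH : ∀ a b : Fin (2 * k), (b : ℕ) = a + k → H.Adj a b) :
    k * L ≤ gweight H w := by
  classical
  let long : Fin k → Sym2 (Fin (2 * k)) := fun a => s(⟨a, by omega⟩, ⟨a + k, by omega⟩)
  have hinj : Function.Injective long := by
    intro a b hab
    rcases Sym2.eq_iff.mp hab with ⟨h, -⟩ | ⟨h, -⟩ <;> simp only [Fin.mk.injEq] at h <;>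
      ext <;> omega
  calc (k : ℝ) * L = ∑ e ∈ Finset.univ.image long, w e := by
        rw [Finset.sum_image fun a _ b _ h => hinj h, Finset.sum_congr rfl fun a _ => hL _ _ rfl]
        simp
    _ ≤ gweight H w := by
        refine sum_le_gweight H ?_ hw
        simp only [Finset.coe_image, Finset.coe_univ, Set.image_univ]
        rintro _ ⟨a, rfl⟩
        exact hH _ _ rfl

variable {r s : ℝ}

lemma gadgetW_sq_of_eq_add (hr : 0 ≤ r) (hs : 0 ≤ s) (hs1 : s ≤ 1)
    (hks : s ^ 2 * (2 * k - 1) = 1) {a b : Fin (2 * k)} {d : ℕ} (h : (b : ℕ) = a + d) :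
    gadgetW r (s ^ 2) s(a, b) = 2 * r * sin (d * s ^ 3 / 2) := by
  have hτ : (s ^ 2) ^ ((3 : ℝ) / 2) = s ^ 3 := by
    rw [← Real.rpow_natCast, ← Real.rpow_mul hs]
    norm_num
  have hd : (d : ℝ) + 1 ≤ 2 * k := by exact_mod_cast (by omega : d + 1 ≤ 2 * k)
  have hangle : d * s ^ 3 / 2 ≤ s / 2 := by nlinarith [pow_nonneg hs 3]
  simp only [gadgetW, Sym2.lift_mk]
  rw [dist_gadgetPt hr, hτ, h]
  push_cast
  rw [add_sub_cancel_left, abs_of_nonneg]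
  exact sin_nonneg_of_nonneg_of_le_pi (by positivity) (by linarith [pi_gt_three])

lemma coreGadget_long_lt_wdist_deleteEdges (hk : 2 ≤ k) (hs : 0 < s) (hs' : s ^ 2 ≤ 1 / 100)
    (hks : s ^ 2 * (2 * k - 1) = 1) (hr : 0 < r) {i j : Fin (2 * k)} (hj : (j : ℕ) = i + k) :
    ENNReal.ofReal ((1 + s ^ 2 / 100) * gadgetW r (s ^ 2) s(i, j)) <
      wdist ((coreGadget k).deleteEdges {s(i, j)}) (gadgetW r (s ^ 2)) i j := by
  have hw {a b : Fin (2 * k)} {d : ℕ} (h : (b : ℕ) = a + d) :=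
    gadgetW_sq_of_eq_add hr.le hs.le (by nlinarith) hks h
  have hk' : (2 : ℝ) ≤ k := by exact_mod_cast hk
  have hσ := sin_pos_of_pos_of_le_one (by positivity : 0 < s ^ 3 / 2) (by nlinarith)
  have hL := sub_two_mul_sin_le hs hs' hks
  have hLσ := one_add_mul_sin_lt hs hs' hks
  have hT := sub_mul_sub_le_sin hs hs' hks
  have hr2 : 0 < 2 * r := by positivity
  rw [hw hj]
  refine ((ENNReal.ofReal_lt_ofReal_iff (by positivity)).2 ?_).trans_le
    (coreGadget_ofReal_le_wdist_deleteEdges (σ := 2 * r * sin (s ^ 3 / 2))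
      (L := 2 * r * sin (k * s ^ 3 / 2)) (T := 2 * r * sin ((2 * k - 1) * s ^ 3 / 2))
      (fun a b h => by simp [hw h]) (fun a b h => (hw h).ge) (fun a b ha hb => ?_) ?_ ?_ ?_ hj)
  · nlinarith [mul_lt_mul_of_pos_left hLσ hr2]
  · rw [hw (d := 2 * k - 1) (by omega), Nat.cast_sub (by omega)]
    simp
  · nlinarith [mul_le_mul_of_nonneg_left hL hr2.le]
  · have hb : 0 ≤ sin (k * s ^ 3 / 2) := (mul_nonneg (by linarith) hσ.le).trans hL
    have : sin (k * s ^ 3 / 2) ≤ k * sin (s ^ 3 / 2) := by nlinarith [sq_nonneg s]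
    nlinarith [mul_le_mul_of_nonneg_left this hr2.le]
  · nlinarith [mul_le_mul_of_nonneg_left hT hr2.le]

lemma mstWeight_coreGadget_le_mul_gweight (hk : 0 < k) (hs : 0 < s) (hs' : s ^ 2 ≤ 1 / 100)
    (hks : s ^ 2 * (2 * k - 1) = 1) (hr : 0 ≤ r) {H : SimpleGraph (Fin (2 * k))}
    (hH : ∀ i j : Fin (2 * k), (j : ℕ) = i + k → H.Adj i j) :
    mstWeight (coreGadget k) (gadgetW r (s ^ 2)) ≤ 6 * s ^ 2 * gweight H (gadgetW r (s ^ 2)) := by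
  have hw {a b : Fin (2 * k)} {d : ℕ} (h : (b : ℕ) = a + d) :=
    gadgetW_sq_of_eq_add hr hs.le (by nlinarith) hks h
  have hmst := mstWeight_coreGadget_le hk (gadgetW_nonneg r (s ^ 2))
    (σ := 2 * r * sin (s ^ 3 / 2)) fun a b h => by simp [hw h]
  have hlong := mul_le_gweight_of_long_edges (gadgetW_nonneg r (s ^ 2)) (fun a b h => hw h) hH
  nlinarith [mul_le_mul_of_nonneg_left (mul_sin_le_mul_sin hs hs' hks)
    (by positivity : 0 ≤ 2 * r)]

end CoreGadget

/-- There is a constant c (c = 100 suffices) such that for all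
sufficiently small ε ∈ (0,1) and all r > 0, every (1+ε/c)-spanner of the core gadget H_r
must contain every long edge of H_r, and consequently has total weight at least
w(MST(H_r))/(6ε).  In particular, for every long edge e = (x_i, x_{i+k}), the
shortest-path distance between x_i and x_{i+k} in H_r with e removed exceeds (1+ε/c)
times the weight of e. -/
theorem core_gadget_spanner_lower_bound :
    ∃ c : ℝ, 0 < c ∧ ∃ ε₀ : ℝ, 0 < ε₀ ∧
      ∀ (ε : ℝ) (k : ℕ), 2 ≤ k → ε = 1 / (2 * (k : ℝ) - 1) → ε ≤ ε₀ →
      ∀ r : ℝ, 0 < r →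
        (∀ H : SimpleGraph (Fin (2 * k)),
          IsSpanner (coreGadget k) H (gadgetW r ε) (1 + ε / c) →
            (∀ i j : Fin (2 * k), (j : ℕ) = (i : ℕ) + k → H.Adj i j) ∧
            mstWeight (coreGadget k) (gadgetW r ε) / (6 * ε) ≤ gweight H (gadgetW r ε)) ∧
        (∀ i j : Fin (2 * k), (j : ℕ) = (i : ℕ) + k →
          ENNReal.ofReal ((1 + ε / c) * gadgetW r ε s(i, j)) <
            wdist ((coreGadget k).deleteEdges {s(i, j)}) (gadgetW r ε) i j) := by
  refine ⟨100, by norm_num, 1 / 100, by norm_num, fun ε k hk hε hε₀ r hr => ?_⟩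
  have hk' : (2 : ℝ) ≤ k := by exact_mod_cast hk
  have hε0 : 0 < ε := hε ▸ one_div_pos.mpr (by linarith)
  obtain ⟨s, hs, rfl⟩ : ∃ s, 0 < s ∧ s ^ 2 = ε :=
    ⟨√ε, sqrt_pos.mpr hε0, sq_sqrt hε0.le⟩
  have hks : s ^ 2 * (2 * k - 1) = 1 := by rw [hε, one_div_mul_cancel (by linarith)]
  have hlong (i j : Fin (2 * k)) (hj : (j : ℕ) = i + k) :=
    coreGadget_long_lt_wdist_deleteEdges hk hs hε₀ hks hr hj
  refine ⟨fun H hH => ?_, hlong⟩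
  have hadj (i j : Fin (2 * k)) (hj : (j : ℕ) = i + k) : H.Adj i j :=
    hH.adj_of_lt_wdist_deleteEdges (by positivity) (coreGadget_adj_of_eq_add hj) (hlong i j hj)
  refine ⟨hadj, (div_le_iff₀ (by positivity)).2 ?_⟩
  linarith [mstWeight_coreGadget_le_mul_gweight (by omega) hs hε₀ hks hr.le hadj]

end LightSpanners
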